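/- Let K ⊆ ℝ^n be a convex body, φ: K → (0,∞) continuous, θ ∈ S^{n-1}, and 0 < δ < ∫_K φ. Let H⁺(θ,δ) be the half-space {x : ⟨x,θ⟩ ≥ d} with d chosen so that ∫_{K∩H⁺} φ = δ. Then the support function of the weighted Ulam floating body M_δ(K,φ) satisfies h_{M_δ(K,φ)}(θ) = (1/δ)∫_{K∩H⁺(θ,δ)} ⟨θ,y⟩ φ(y) dy, and the weighted barycenter x(θ,δ) = (1/δ)∫_{K∩H⁺(θ,δ)} y φ(y) dy is the unique point of ∂M_δ(K,φ) with outer normal θ; in particular M_δ(K,φ) is strictly convex. -/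

import Mathlib

open MeasureTheory Metric Set
open scoped RealInnerProductSpace ENNReal Topology Pointwise

noncomputable def metronoid {n : ℕ} (μ : Measure (EuclideanSpace ℝ (Fin n))) :
    Set (EuclideanSpace ℝ (Fin n)) :=
  {z | ∃ f : EuclideanSpace ℝ (Fin n) → ℝ,
    (∀ y, 0 ≤ f y ∧ f y ≤ 1) ∧ Integrable f μ ∧ (∫ y, f y ∂μ) = 1 ∧
    Integrable (fun y => f y • y) μ ∧ z = ∫ y, f y • y ∂μ}

/-- The weighted Ulam floating body `M_δ(K, φ)`: the metronoid of the measure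
with density `φ·𝟙_K/δ`. -/
noncomputable def ulamW {n : ℕ} (K : Set (EuclideanSpace ℝ (Fin n)))
    (φ : EuclideanSpace ℝ (Fin n) → ℝ) (δ : ℝ) : Set (EuclideanSpace ℝ (Fin n)) :=
  metronoid ((volume.restrict K).withDensity fun x => ENNReal.ofReal (φ x / δ))

/-! The bathtub principle. Let `ν` be the measure with density `φ 𝟙_K / δ`, `H = {⟪y, θ⟫ ≥ d}`
the cap of `ν`-mass one, and `0 ≤ f ≤ 1` a density of `ν`-mass one. Pointwise
`(𝟙_H - f) (⟪y, θ⟫ - d) ≥ 0`, and the integral of this function is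
`⟪x(θ, δ), θ⟫ - ⟪∫ f y • y dν, θ⟫`, because the masses agree. Hence `x(θ, δ)` maximises `⟪·, θ⟫`
on `M_δ(K, φ)`, and equality forces `f = 𝟙_H` off the hyperplane `⟪y, θ⟫ = d`, which is
Lebesgue-null, so the maximiser is unique. The cap mass is continuous in `d`, so every direction has
such a cap; a convex set on which every nonzero linear functional has a unique maximiser is strictly
convex, since a non-interior point of an open segment lies on a supporting hyperplane, which then
contains the whole segment. -/

section Bathtub

variable {E : Type*} [NormedAddCommGroup E] [InnerProductSpace ℝ E]

noncomputable def halfSpaceIndicator (u : E) (d : ℝ) : E → ℝ := {y | d ≤ ⟪y, u⟫}.indicator 1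

lemma halfSpaceIndicator_nonneg_and_le_one (u : E) (d : ℝ) (y : E) :
    0 ≤ halfSpaceIndicator u d y ∧ halfSpaceIndicator u d y ≤ 1 := by
  by_cases h : d ≤ ⟪y, u⟫
  · simp [halfSpaceIndicator, indicator_of_mem (show y ∈ {y | d ≤ ⟪y, u⟫} from h)]
  · simp [halfSpaceIndicator, indicator_of_notMem (show y ∉ {y | d ≤ ⟪y, u⟫} from h)]

lemma halfSpaceIndicator_smul {G : Type*} [AddCommGroup G] [Module ℝ G] (u : E) (d : ℝ)
    (g : E → G) :
    (fun y => halfSpaceIndicator u d y • g y) = {y | d ≤ ⟪y, u⟫}.indicator g := by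
  ext y
  rw [halfSpaceIndicator, ← indicator_smul_apply_left]
  simp only [Pi.one_apply, one_smul]

lemma halfSpaceIndicator_sub_mul_nonneg {u : E} {d : ℝ} {f : E → ℝ}
    (hf : ∀ y, 0 ≤ f y ∧ f y ≤ 1) (y : E) :
    0 ≤ (halfSpaceIndicator u d y - f y) * (⟪y, u⟫ - d) := by
  by_cases h : d ≤ ⟪y, u⟫
  · simp only [halfSpaceIndicator, indicator_of_mem (show y ∈ {y | d ≤ ⟪y, u⟫} from h),
      Pi.one_apply]
    nlinarith [(hf y).2]
  · simp only [halfSpaceIndicator, indicator_of_notMem (show y ∉ {y | d ≤ ⟪y, u⟫} from h)]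
    nlinarith [(hf y).1]

variable [CompleteSpace E] [MeasurableSpace E] {μ : Measure E} {u : E} {d : ℝ}

lemma integral_mul_inner_sub {g : E → ℝ} (hg : Integrable g μ)
    (hgy : Integrable (fun y => g y • y) μ) :
    Integrable (fun y => g y * (⟪y, u⟫ - d)) μ ∧
      ∫ y, g y * (⟪y, u⟫ - d) ∂μ = ⟪∫ y, g y • y ∂μ, u⟫ - d * ∫ y, g y ∂μ := by
  have hexp : (fun y => g y * (⟪y, u⟫ - d)) = fun y => ⟪u, g y • y⟫ - d * g y := by
    ext y
    rw [real_inner_smul_right, real_inner_comm]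
    ring
  have hinner : Integrable (fun y => ⟪u, g y • y⟫) μ := (innerSL ℝ u).integrable_comp hgy
  rw [hexp]
  refine ⟨hinner.sub (hg.const_mul d), ?_⟩
  rw [integral_sub hinner (hg.const_mul d), integral_inner hgy, integral_const_mul,
    real_inner_comm]

variable {f : E → ℝ} (hf : ∀ y, 0 ≤ f y ∧ f y ≤ 1) (hfi : Integrable f μ)
  (hfy : Integrable (fun y => f y • y) μ) (hχ : Integrable (halfSpaceIndicator u d) μ)
  (hχy : Integrable (fun y => halfSpaceIndicator u d y • y) μ)
  (hmass : ∫ y, f y ∂μ = ∫ y, halfSpaceIndicator u d y ∂μ)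
include hfi hfy hχ hχy hmass

lemma integral_halfSpaceIndicator_sub_mul :
    Integrable (fun y => (halfSpaceIndicator u d y - f y) * (⟪y, u⟫ - d)) μ ∧
      ∫ y, (halfSpaceIndicator u d y - f y) * (⟪y, u⟫ - d) ∂μ =
        ⟪∫ y, halfSpaceIndicator u d y • y ∂μ, u⟫ - ⟪∫ y, f y • y ∂μ, u⟫ := by
  have hgy : Integrable (fun y => (halfSpaceIndicator u d y - f y) • y) μ := by
    simp only [sub_smul]
    exact hχy.sub hfy
  obtain ⟨hint, heq⟩ := integral_mul_inner_sub (u := u) (d := d) (hχ.sub hfi) hgy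
  refine ⟨hint, ?_⟩
  simp only [Pi.sub_apply, sub_smul] at heq
  rw [heq, integral_sub hχ hfi, ← hmass, sub_self, mul_zero, sub_zero, integral_sub hχy hfy,
    inner_sub_left]

include hf

theorem inner_integral_smul_le_halfSpaceIndicator :
    ⟪∫ y, f y • y ∂μ, u⟫ ≤ ⟪∫ y, halfSpaceIndicator u d y • y ∂μ, u⟫ := by
  have h := (integral_halfSpaceIndicator_sub_mul hfi hfy hχ hχy hmass).2 ▸
    integral_nonneg (halfSpaceIndicator_sub_mul_nonneg hf)
  linarith

theorem integral_smul_eq_halfSpaceIndicator_of_inner_eq (hplane : μ {y | ⟪y, u⟫ = d} = 0)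
    (heq : ⟪∫ y, f y • y ∂μ, u⟫ = ⟪∫ y, halfSpaceIndicator u d y • y ∂μ, u⟫) :
    ∫ y, f y • y ∂μ = ∫ y, halfSpaceIndicator u d y • y ∂μ := by
  obtain ⟨hint, hgap⟩ := integral_halfSpaceIndicator_sub_mul hfi hfy hχ hχy hmass
  rw [heq, sub_self, integral_eq_zero_iff_of_nonneg
    (halfSpaceIndicator_sub_mul_nonneg hf) hint] at hgap
  have hoff : ∀ᵐ y ∂μ, ⟪y, u⟫ ≠ d := measure_eq_zero_iff_ae_notMem.mp hplane
  refine integral_congr_ae ?_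
  filter_upwards [hgap, hoff] with y hy hyd
  rw [Pi.zero_apply, mul_eq_zero_iff_right (sub_ne_zero.mpr hyd), sub_eq_zero] at hy
  rw [hy]

end Bathtub

section StrictConvexity

variable {F : Type*} [NormedAddCommGroup F] [InnerProductSpace ℝ F] [FiniteDimensional ℝ F]
  {M : Set F}

theorem Convex.exists_isMaxOn_inner_of_notMem_interior (hM : Convex ℝ M) {z : F} (hz : z ∈ M)
    (hzi : z ∉ interior M) : ∃ u ≠ 0, IsMaxOn (⟪·, u⟫) M z := by
  rcases (interior M).eq_empty_or_nonempty with hint | hint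
  · have hspan : (affineSpan ℝ M).direction ≠ ⊤ := by
      rw [Ne, AffineSubspace.direction_eq_top_iff_of_nonempty ⟨z, subset_affineSpan ℝ M hz⟩,
        ← hM.interior_nonempty_iff_affineSpan_eq_top, hint]
      exact not_nonempty_empty
    obtain ⟨u, hu, hu0⟩ := Submodule.exists_mem_ne_zero_of_ne_bot
      (mt Submodule.orthogonal_eq_bot_iff.mp hspan)
    refine ⟨u, hu0, isMaxOn_iff.mpr fun w hw => le_of_eq ?_⟩
    have h := (Submodule.mem_orthogonal _ u).mp hu _ (AffineSubspace.vsub_mem_direction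
      (subset_affineSpan ℝ M hw) (subset_affineSpan ℝ M hz))
    rwa [vsub_eq_sub, inner_sub_left, sub_eq_zero] at h
  · obtain ⟨g, hg0, hg⟩ := geometric_hahn_banach_of_nonempty_interior_point hM hzi hint
    have hdual : ∀ v, ⟪v, (InnerProductSpace.toDual ℝ F).symm g⟫ = g v := fun v => by
      rw [real_inner_comm, InnerProductSpace.toDual_symm_apply]
    refine ⟨(InnerProductSpace.toDual ℝ F).symm g, by simpa using hg0,
      isMaxOn_iff.mpr fun w hw => ?_⟩
    simpa only [hdual] using hg w hw

theorem Convex.strictConvex_of_isMaxOn_inner_unique (hM : Convex ℝ M)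
    (h : ∀ u ≠ 0, ∀ x ∈ M, ∀ y ∈ M, IsMaxOn (⟪·, u⟫) M x → IsMaxOn (⟪·, u⟫) M y → x = y) :
    StrictConvex ℝ M := by
  intro x hx y hy hxy a b ha hb hab
  by_contra hzi
  obtain ⟨u, hu0, hmax⟩ := hM.exists_isMaxOn_inner_of_notMem_interior
    (hM hx hy ha.le hb.le hab) hzi
  have hxz := isMaxOn_iff.mp hmax x hx
  have hyz := isMaxOn_iff.mp hmax y hy
  have hz : ⟪a • x + b • y, u⟫ = a * ⟪x, u⟫ + b * ⟪y, u⟫ := by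
    rw [inner_add_left, real_inner_smul_left, real_inner_smul_left]
  have hgap : a * (⟪a • x + b • y, u⟫ - ⟪x, u⟫) + b * (⟪a • x + b • y, u⟫ - ⟪y, u⟫) = 0 := by
    rw [hz]
    linear_combination (a * ⟪x, u⟫ + b * ⟪y, u⟫) * hab
  have hxz' : ⟪x, u⟫ = ⟪a • x + b • y, u⟫ := by
    nlinarith [mul_nonneg hb.le (sub_nonneg.2 hyz)]
  have hyz' : ⟪y, u⟫ = ⟪a • x + b • y, u⟫ := by
    nlinarith [mul_nonneg ha.le (sub_nonneg.2 hxz)]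
  exact hxy (h u hu0 x hx y hy
    (isMaxOn_iff.mpr fun w hw => hxz' ▸ isMaxOn_iff.mp hmax w hw)
    (isMaxOn_iff.mpr fun w hw => hyz' ▸ isMaxOn_iff.mp hmax w hw))

end StrictConvexity

section HalfSpaces

variable {F : Type*} [NormedAddCommGroup F] [InnerProductSpace ℝ F] [MeasurableSpace F]

theorem addHaar_setOf_inner_eq [BorelSpace F] [FiniteDimensional ℝ F] (μ : Measure F)
    [μ.IsAddHaarMeasure] {u : F} (hu : u ≠ 0) (c : ℝ) : μ {y | ⟪y, u⟫ = c} = 0 := by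
  set p : F := (c / ‖u‖ ^ 2) • u
  have hp : ⟪p, u⟫ = c := by
    rw [real_inner_smul_left, real_inner_self_eq_norm_sq,
      div_mul_cancel₀ _ (pow_ne_zero 2 (norm_ne_zero_iff.mpr hu))]
  let s : AffineSubspace ℝ F := AffineSubspace.mk' p (LinearMap.ker (innerₛₗ ℝ u))
  have hs : (s : Set F) = {y | ⟪y, u⟫ = c} := by
    ext y
    simp only [s, SetLike.mem_coe, AffineSubspace.mem_mk', LinearMap.mem_ker, innerₛₗ_apply_apply,
      vsub_eq_sub, inner_sub_right, sub_eq_zero, mem_ofPred_eq]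
    rw [real_inner_comm y u, real_inner_comm p u, hp]
  have hpu : p + u ∉ s := by
    rw [← SetLike.mem_coe, hs, mem_ofPred_eq, inner_add_left, hp, add_eq_left]
    exact inner_self_ne_zero.mpr hu
  rw [← hs]
  exact Measure.addHaar_affineSubspace μ s fun htop => hpu (htop ▸ AffineSubspace.mem_top ℝ F _)

variable [OpensMeasurableSpace F] {μ : Measure F} {u : F} {φ : F → ℝ} {s : Set F}

lemma measurableSet_halfSpace (u : F) (t : ℝ) : MeasurableSet {y : F | t ≤ ⟪y, u⟫} :=
  (isClosed_le continuous_const (continuous_id.inner continuous_const)).measurableSet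

theorem continuous_setIntegral_inter_halfSpace (hφ : IntegrableOn φ s μ)
    (hplane : ∀ t, μ {y | ⟪y, u⟫ = t} = 0) :
    Continuous fun t => ∫ y in s ∩ {y | t ≤ ⟪y, u⟫}, φ y ∂μ := by
  have hind : ∀ t, ∫ y in s ∩ {y | t ≤ ⟪y, u⟫}, φ y ∂μ =
      ∫ y in s, {y | t ≤ ⟪y, u⟫}.indicator φ y ∂μ := fun t => by
    rw [integral_indicator (measurableSet_halfSpace u t), Measure.restrict_restrict
      (measurableSet_halfSpace u t), inter_comm]
  simp only [hind]
  refine continuous_iff_continuousAt.mpr fun t₀ => continuousAt_of_dominated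
    (Filter.Eventually.of_forall fun t => hφ.aestronglyMeasurable.indicator
      (measurableSet_halfSpace u t))
    (Filter.Eventually.of_forall fun t => Filter.Eventually.of_forall fun y =>
      norm_indicator_le_norm_self φ y)
    hφ.norm ?_
  have hoff : ∀ᵐ y ∂μ.restrict s, ⟪y, u⟫ ≠ t₀ :=
    ae_restrict_of_ae (measure_eq_zero_iff_ae_notMem.mp (hplane t₀))
  filter_upwards [hoff] with y hy
  rcases hy.lt_or_gt with hlt | hgt
  · refine ContinuousAt.congr_of_eventuallyEq (f := fun _ => 0) continuousAt_const ?_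
    filter_upwards [eventually_gt_nhds hlt] with t ht
    exact indicator_of_notMem (show y ∉ {y | t ≤ ⟪y, u⟫} from not_le.mpr ht) φ
  · refine ContinuousAt.congr_of_eventuallyEq (f := fun _ => φ y) continuousAt_const ?_
    filter_upwards [eventually_lt_nhds hgt] with t ht
    exact indicator_of_mem (show y ∈ {y | t ≤ ⟪y, u⟫} from ht.le) φ

theorem exists_setIntegral_inter_halfSpace_eq (hs : Bornology.IsBounded s)
    (hφ : IntegrableOn φ s μ) (hplane : ∀ t, μ {y | ⟪y, u⟫ = t} = 0) {δ : ℝ} (hδ0 : 0 ≤ δ)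
    (hδ : δ ≤ ∫ y in s, φ y ∂μ) : ∃ d, ∫ y in s ∩ {y | d ≤ ⟪y, u⟫}, φ y ∂μ = δ := by
  obtain ⟨R, hR0, hR⟩ := hs.exists_pos_norm_le
  have hbound : ∀ y ∈ s, |⟪y, u⟫| ≤ R * ‖u‖ := fun y hy =>
    (abs_real_inner_le_norm y u).trans (mul_le_mul_of_nonneg_right (hR y hy) (norm_nonneg u))
  have hbelow : s ∩ {y | -(R * ‖u‖) ≤ ⟪y, u⟫} = s :=
    inter_eq_self_of_subset_left fun y hy => (abs_le.mp (hbound y hy)).1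
  have habove : s ∩ {y | R * ‖u‖ + 1 ≤ ⟪y, u⟫} = ∅ :=
    eq_empty_of_forall_notMem fun y ⟨hy, hy'⟩ => by
      linarith [(abs_le.mp (hbound y hy)).2, show R * ‖u‖ + 1 ≤ ⟪y, u⟫ from hy']
  have hδmem : δ ∈ Icc (∫ y in s ∩ {y | R * ‖u‖ + 1 ≤ ⟪y, u⟫}, φ y ∂μ)
      (∫ y in s ∩ {y | -(R * ‖u‖) ≤ ⟪y, u⟫}, φ y ∂μ) := by
    rw [hbelow, habove, setIntegral_empty]
    exact ⟨hδ0, hδ⟩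
  obtain ⟨d, -, hd⟩ := intermediate_value_Icc'
    (by nlinarith [mul_nonneg hR0.le (norm_nonneg u)])
    (continuous_setIntegral_inter_halfSpace hφ hplane).continuousOn hδmem
  exact ⟨d, hd⟩

end HalfSpaces

section WithDensity

variable {X G : Type*} [MeasurableSpace X] [NormedAddCommGroup G] [NormedSpace ℝ G]
  {μ : Measure X} {w : X → ℝ}

lemma integrable_withDensity_ofReal_iff (hw : AEMeasurable w μ) (hw0 : 0 ≤ᵐ[μ] w)
    {g : X → G} :
    Integrable g (μ.withDensity fun x => ENNReal.ofReal (w x)) ↔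
      Integrable (fun x => w x • g x) μ := by
  rw [integrable_withDensity_iff_integrable_smul₀' hw.ennreal_ofReal
    (ae_of_all _ fun _ => ENNReal.ofReal_lt_top)]
  refine integrable_congr ?_
  filter_upwards [hw0] with x hx
  rw [ENNReal.toReal_ofReal hx]

lemma integral_withDensity_ofReal (hw : AEMeasurable w μ) (hw0 : 0 ≤ᵐ[μ] w) (g : X → G) :
    ∫ x, g x ∂μ.withDensity (fun x => ENNReal.ofReal (w x)) = ∫ x, w x • g x ∂μ := by
  rw [integral_withDensity_eq_integral_toReal_smul₀ hw.ennreal_ofReal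
    (ae_of_all _ fun _ => ENNReal.ofReal_lt_top)]
  refine integral_congr_ae ?_
  filter_upwards [hw0] with x hx
  rw [ENNReal.toReal_ofReal hx]

end WithDensity

section Metronoid

variable {n : ℕ}

theorem convex_metronoid (μ : Measure (EuclideanSpace ℝ (Fin n))) : Convex ℝ (metronoid μ) := by
  rintro _ ⟨f₁, h₁, hi₁, hs₁, hv₁, rfl⟩ _ ⟨f₂, h₂, hi₂, hs₂, hv₂, rfl⟩ a b ha hb hab
  have hmix : (fun y => (a * f₁ y + b * f₂ y) • y) =
      fun y => a • (f₁ y • y) + b • (f₂ y • y) := by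
    ext y
    simp only [add_smul, mul_smul]
  have hva : Integrable (fun y => a • (f₁ y • y)) μ := hv₁.smul a
  have hvb : Integrable (fun y => b • (f₂ y • y)) μ := hv₂.smul b
  refine ⟨fun y => a * f₁ y + b * f₂ y,
    fun y => ⟨by nlinarith [h₁ y, h₂ y], by nlinarith [h₁ y, h₂ y]⟩,
    (hi₁.const_mul a).add (hi₂.const_mul b), ?_, hmix ▸ hva.add hvb, ?_⟩
  · rw [integral_add (hi₁.const_mul a) (hi₂.const_mul b), integral_const_mul, integral_const_mul,
      hs₁, hs₂, mul_one, mul_one, hab]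
  · rw [hmix, integral_add hva hvb, integral_smul, integral_smul]

noncomputable def weightedMeasure (K : Set (EuclideanSpace ℝ (Fin n)))
    (φ : EuclideanSpace ℝ (Fin n) → ℝ) (δ : ℝ) : Measure (EuclideanSpace ℝ (Fin n)) :=
  (volume.restrict K).withDensity fun x => ENNReal.ofReal (φ x / δ)

noncomputable def capBarycenter (K : Set (EuclideanSpace ℝ (Fin n)))
    (φ : EuclideanSpace ℝ (Fin n) → ℝ) (δ : ℝ) (u : EuclideanSpace ℝ (Fin n)) (d : ℝ) :
    EuclideanSpace ℝ (Fin n) :=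
  δ⁻¹ • ∫ y in K ∩ {y | d ≤ ⟪y, u⟫}, φ y • y

variable {K : Set (EuclideanSpace ℝ (Fin n))} {φ : EuclideanSpace ℝ (Fin n) → ℝ} {δ : ℝ}
  {u : EuclideanSpace ℝ (Fin n)} {d : ℝ}

lemma weightedMeasure_absolutelyContinuous : weightedMeasure K φ δ ≪ volume :=
  (withDensity_absolutelyContinuous _ _).trans Measure.absolutelyContinuous_restrict

lemma weightedMeasure_setOf_inner_eq (hu : u ≠ 0) (t : ℝ) :
    weightedMeasure K φ δ {y | ⟪y, u⟫ = t} = 0 :=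
  weightedMeasure_absolutelyContinuous (addHaar_setOf_inner_eq volume hu t)

theorem inner_capBarycenter (hK : IsCompact K) (hφc : ContinuousOn φ K) :
    ⟪capBarycenter K φ δ u d, u⟫ = δ⁻¹ * ∫ y in K ∩ {y | d ≤ ⟪y, u⟫}, ⟪u, y⟫ * φ y := by
  have hint : IntegrableOn (fun y => φ y • y) (K ∩ {y | d ≤ ⟪y, u⟫}) :=
    ((hφc.smul continuousOn_id).integrableOn_compact hK).mono_set inter_subset_left
  rw [capBarycenter, real_inner_smul_left, real_inner_comm, ← integral_inner hint]
  simp only [real_inner_smul_right, mul_comm]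

section Cap

variable {G : Type*} [NormedAddCommGroup G] [NormedSpace ℝ G]
  (hK : IsCompact K) (hφ : ∀ x ∈ K, 0 ≤ φ x) (hφc : ContinuousOn φ K) (hδ : 0 < δ)
include hK hφ hφc hδ

lemma integrable_halfSpaceIndicator_smul_weightedMeasure {g : EuclideanSpace ℝ (Fin n) → G}
    (hg : Continuous g) :
    Integrable (fun y => halfSpaceIndicator u d y • g y) (weightedMeasure K φ δ) := by
  have hS := measurableSet_halfSpace u d
  rw [halfSpaceIndicator_smul, integrable_indicator_iff hS, IntegrableOn, weightedMeasure,
    restrict_withDensity hS, Measure.restrict_restrict hS, integrable_withDensity_ofReal_iff]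
  · exact ((hφc.mono inter_subset_right).div_const δ).smul hg.continuousOn
      |>.integrableOn_compact (hK.inter_left (isClosed_le continuous_const
        (continuous_id.inner continuous_const)))
  · exact ((hφc.mono inter_subset_right).aemeasurable (hS.inter hK.measurableSet)).div_const δ
  · exact ae_restrict_of_forall_mem (hS.inter hK.measurableSet) fun x hx =>
      div_nonneg (hφ x hx.2) hδ.le

lemma integrable_halfSpaceIndicator_weightedMeasure :
    Integrable (halfSpaceIndicator u d) (weightedMeasure K φ δ) := by
  have h := integrable_halfSpaceIndicator_smul_weightedMeasure (u := u) (d := d) hK hφ hφc hδ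
    (continuous_const (y := (1 : ℝ)))
  simp only [smul_eq_mul, mul_one] at h
  exact h

lemma integral_halfSpaceIndicator_smul_weightedMeasure (g : EuclideanSpace ℝ (Fin n) → G) :
    ∫ y, halfSpaceIndicator u d y • g y ∂weightedMeasure K φ δ =
      δ⁻¹ • ∫ y in K ∩ {y | d ≤ ⟪y, u⟫}, φ y • g y := by
  have hS := measurableSet_halfSpace u d
  rw [halfSpaceIndicator_smul, integral_indicator hS, weightedMeasure, restrict_withDensity hS,
    Measure.restrict_restrict hS, integral_withDensity_ofReal, inter_comm _ K, ← integral_smul]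
  · simp only [div_eq_inv_mul, mul_smul]
  · exact ((hφc.mono inter_subset_right).aemeasurable (hS.inter hK.measurableSet)).div_const δ
  · exact ae_restrict_of_forall_mem (hS.inter hK.measurableSet) fun x hx =>
      div_nonneg (hφ x hx.2) hδ.le

lemma integral_halfSpaceIndicator_weightedMeasure
    (hd : ∫ y in K ∩ {y | d ≤ ⟪y, u⟫}, φ y = δ) :
    ∫ y, halfSpaceIndicator u d y ∂weightedMeasure K φ δ = 1 := by
  simpa only [smul_eq_mul, mul_one, hd, inv_mul_cancel₀ hδ.ne'] using
    integral_halfSpaceIndicator_smul_weightedMeasure (u := u) (d := d) hK hφ hφc hδ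
      fun _ => (1 : ℝ)

lemma capBarycenter_eq_integral :
    capBarycenter K φ δ u d = ∫ y, halfSpaceIndicator u d y • y ∂weightedMeasure K φ δ :=
  (integral_halfSpaceIndicator_smul_weightedMeasure hK hφ hφc hδ fun y => y).symm

theorem capBarycenter_mem_ulamW (hd : ∫ y in K ∩ {y | d ≤ ⟪y, u⟫}, φ y = δ) :
    capBarycenter K φ δ u d ∈ ulamW K φ δ :=
  ⟨halfSpaceIndicator u d, halfSpaceIndicator_nonneg_and_le_one u d,
    integrable_halfSpaceIndicator_weightedMeasure hK hφ hφc hδ,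
    integral_halfSpaceIndicator_weightedMeasure hK hφ hφc hδ hd,
    integrable_halfSpaceIndicator_smul_weightedMeasure hK hφ hφc hδ continuous_id,
    capBarycenter_eq_integral hK hφ hφc hδ⟩

theorem inner_le_inner_capBarycenter (hd : ∫ y in K ∩ {y | d ≤ ⟪y, u⟫}, φ y = δ)
    {z : EuclideanSpace ℝ (Fin n)} (hz : z ∈ ulamW K φ δ) :
    ⟪z, u⟫ ≤ ⟪capBarycenter K φ δ u d, u⟫ := by
  obtain ⟨f, hf, hfi, hf1, hfy, rfl⟩ := hz
  rw [capBarycenter_eq_integral hK hφ hφc hδ]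
  exact inner_integral_smul_le_halfSpaceIndicator hf hfi hfy
    (integrable_halfSpaceIndicator_weightedMeasure hK hφ hφc hδ)
    (integrable_halfSpaceIndicator_smul_weightedMeasure hK hφ hφc hδ continuous_id)
    (hf1.trans (integral_halfSpaceIndicator_weightedMeasure hK hφ hφc hδ hd).symm)

theorem eq_capBarycenter_of_inner_eq (hu : u ≠ 0)
    (hd : ∫ y in K ∩ {y | d ≤ ⟪y, u⟫}, φ y = δ) {z : EuclideanSpace ℝ (Fin n)}
    (hz : z ∈ ulamW K φ δ) (heq : ⟪z, u⟫ = ⟪capBarycenter K φ δ u d, u⟫) :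
    z = capBarycenter K φ δ u d := by
  obtain ⟨f, hf, hfi, hf1, hfy, rfl⟩ := hz
  rw [capBarycenter_eq_integral hK hφ hφc hδ] at heq ⊢
  exact integral_smul_eq_halfSpaceIndicator_of_inner_eq hf hfi hfy
    (integrable_halfSpaceIndicator_weightedMeasure hK hφ hφc hδ)
    (integrable_halfSpaceIndicator_smul_weightedMeasure hK hφ hφc hδ continuous_id)
    (hf1.trans (integral_halfSpaceIndicator_weightedMeasure hK hφ hφc hδ hd).symm)
    (weightedMeasure_setOf_inner_eq hu d) heq

theorem eq_capBarycenter_of_isMaxOn (hu : u ≠ 0) (hd : ∫ y in K ∩ {y | d ≤ ⟪y, u⟫}, φ y = δ)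
    {x : EuclideanSpace ℝ (Fin n)} (hx : x ∈ ulamW K φ δ)
    (hmax : IsMaxOn (⟪·, u⟫) (ulamW K φ δ) x) : x = capBarycenter K φ δ u d :=
  eq_capBarycenter_of_inner_eq hK hφ hφc hδ hu hd hx <|
    le_antisymm (inner_le_inner_capBarycenter hK hφ hφc hδ hd hx)
      (isMaxOn_iff.mp hmax _ (capBarycenter_mem_ulamW hK hφ hφc hδ hd))

theorem strictConvex_ulamW (hδK : δ ≤ ∫ x in K, φ x) : StrictConvex ℝ (ulamW K φ δ) := by
  refine (convex_metronoid _).strictConvex_of_isMaxOn_inner_unique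
    fun u hu x hx y hy hxmax hymax => ?_
  obtain ⟨d, hd⟩ := exists_setIntegral_inter_halfSpace_eq hK.isBounded
    (hφc.integrableOn_compact hK) (addHaar_setOf_inner_eq volume hu) hδ.le hδK
  rw [eq_capBarycenter_of_isMaxOn hK hφ hφc hδ hu hd hx hxmax,
    eq_capBarycenter_of_isMaxOn hK hφ hφc hδ hu hd hy hymax]

end Cap

end Metronoid

theorem stmt3_general (n : ℕ) (K : Set (EuclideanSpace ℝ (Fin n)))
    (hK : IsCompact K)
    (φ : EuclideanSpace ℝ (Fin n) → ℝ) (hφpos : ∀ x ∈ K, 0 < φ x)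
    (hφcont : ContinuousOn φ K)
    (θ : EuclideanSpace ℝ (Fin n)) (hθ : ‖θ‖ = 1)
    (δ : ℝ) (hδ0 : 0 < δ) (hδ1 : δ < ∫ x in K, φ x)
    (d : ℝ) (hd : (∫ y in K ∩ {y | d ≤ ⟪y, θ⟫}, φ y) = δ) :
    (δ⁻¹ • ∫ y in K ∩ {y | d ≤ ⟪y, θ⟫}, φ y • y) ∈ ulamW K φ δ ∧
    (∀ z ∈ ulamW K φ δ,
      ⟪z, θ⟫ ≤ δ⁻¹ * ∫ y in K ∩ {y | d ≤ ⟪y, θ⟫}, ⟪θ, y⟫ * φ y) ∧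
    (∀ z ∈ ulamW K φ δ,
      ⟪z, θ⟫ = δ⁻¹ * (∫ y in K ∩ {y | d ≤ ⟪y, θ⟫}, ⟪θ, y⟫ * φ y) →
      z = δ⁻¹ • ∫ y in K ∩ {y | d ≤ ⟪y, θ⟫}, φ y • y) ∧
    StrictConvex ℝ (ulamW K φ δ) := by
  have hθ0 : θ ≠ 0 := by
    rintro rfl
    simp at hθ
  have hφ : ∀ x ∈ K, 0 ≤ φ x := fun x hx => (hφpos x hx).le
  have hsupp := inner_capBarycenter (δ := δ) (u := θ) (d := d) hK hφcont
  refine ⟨capBarycenter_mem_ulamW hK hφ hφcont hδ0 hd, fun z hz => ?_, fun z hz heq => ?_,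
    strictConvex_ulamW hK hφ hφcont hδ0 hδ1.le⟩
  · exact hsupp ▸ inner_le_inner_capBarycenter hK hφ hφcont hδ0 hd hz
  · exact eq_capBarycenter_of_inner_eq hK hφ hφcont hδ0 hθ0 hd hz (hsupp ▸ heq)

/-- The weighted barycenter of the cap `K ∩ {y : ⟨y,θ⟩ ≥ d}` is the unique point of
`∂M_δ(K,φ)` maximizing `⟨·,θ⟩`; its support value is `(1/δ)∫_{K∩H⁺}⟨θ,y⟩φ(y)dy`;
and `M_δ(K,φ)` is strictly convex. -/
theorem stmt3 (n : ℕ) (K : Set (EuclideanSpace ℝ (Fin n)))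
    (hK : IsCompact K) (hKc : Convex ℝ K) (hKi : (interior K).Nonempty)
    (φ : EuclideanSpace ℝ (Fin n) → ℝ) (hφpos : ∀ x ∈ K, 0 < φ x)
    (hφcont : ContinuousOn φ K)
    (θ : EuclideanSpace ℝ (Fin n)) (hθ : ‖θ‖ = 1)
    (δ : ℝ) (hδ0 : 0 < δ) (hδ1 : δ < ∫ x in K, φ x)
    (d : ℝ) (hd : (∫ y in K ∩ {y | d ≤ ⟪y, θ⟫}, φ y) = δ) :
    (δ⁻¹ • ∫ y in K ∩ {y | d ≤ ⟪y, θ⟫}, φ y • y) ∈ ulamW K φ δ ∧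
    (∀ z ∈ ulamW K φ δ,
      ⟪z, θ⟫ ≤ δ⁻¹ * ∫ y in K ∩ {y | d ≤ ⟪y, θ⟫}, ⟪θ, y⟫ * φ y) ∧
    (∀ z ∈ ulamW K φ δ,
      ⟪z, θ⟫ = δ⁻¹ * (∫ y in K ∩ {y | d ≤ ⟪y, θ⟫}, ⟪θ, y⟫ * φ y) →
      z = δ⁻¹ • ∫ y in K ∩ {y | d ≤ ⟪y, θ⟫}, φ y • y) ∧
    StrictConvex ℝ (ulamW K φ δ) :=
  stmt3_general n K hK φ hφpos hφcont θ hθ δ hδ0 hδ1 d hd
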